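/- arXiv:1908.04038 — 4 statements merged into one kernel-verified Lean document; each statement's English description precedes it below -/
import Mathlib

section
/- Let S₀, S₁ ⊆ ℕ be sets of natural numbers such that ℕ \ 2^ℕ ⊆ S₁ (i.e. every natural number that is not a power of two belongs to S₁). Then the unary languages a^{S₀} and a^{S₁} are regularly separable if and only if S₀ is finite and S₀ ∩ S₁ = ∅. -/
/-!
A separator `R` of `a^S₀` from `a^S₁` can only contain words whose length is a power of two,
since every other length lies in `S₁`. Pumping a long word of the regular language `R` yields
three words of `R` whose lengths form an arithmetic progression with positive difference, and
no three powers of two do; so the words of `R` have bounded length and `S₀` is finite.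
Conversely, for finite `S₀` the language `a^S₀` is finite, hence regular, and it separates.
-/

/-- Two languages `K` and `L` are regularly separable if there is a regular
language `R` with `K ⊆ R` and `R ∩ L = ∅`. -/
def RegularlySeparable {α : Type} (K L : Language α) : Prop :=
  ∃ R : Language α, R.IsRegular ∧ K ≤ R ∧ R ⊓ L = ⊥

/-- For `S ⊆ ℕ`, the unary language `a^S` over the one-letter alphabet. -/
def unaryLang (S : Set ℕ) : Language Unit :=
  {w : List Unit | w.length ∈ S}

namespace Language

variable {α : Type*} {L : Language α}

theorem isRegular_of_finite (hL : Set.Finite L) : L.IsRegular := by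
  refine .of_finite_range_leftQuotient ?_
  have hprefixes : {x : List α | ∃ w ∈ L, x <+: w}.Finite := by
    refine (hL.biUnion fun w _ => w.inits.finite_toSet).subset ?_
    rintro x ⟨w, hw, hxw⟩
    exact Set.mem_biUnion hw (List.mem_inits _ _ |>.mpr hxw)
  refine ((hprefixes.image L.leftQuotient).insert 0).subset ?_
  rintro _ ⟨x, rfl⟩
  by_cases hx : ∃ w ∈ L, x <+: w
  · exact Or.inr ⟨x, hx, rfl⟩
  · exact Or.inl (ext fun y => iff_of_false (fun hy => hx ⟨_, hy, List.prefix_append x y⟩)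
      (notMem_zero y))

theorem IsRegular.exists_pumping_lengths (hL : L.IsRegular) :
    ∃ N, ∀ x ∈ L, N ≤ x.length → ∃ n d, 0 < d ∧ ∀ k : ℕ, ∃ y ∈ L, y.length = n + k * d := by
  obtain ⟨σ, _, M, rfl⟩ := hL
  refine ⟨Fintype.card σ, fun x hx hlen => ?_⟩
  obtain ⟨a, b, c, -, -, hb, hpump⟩ := M.pumping_lemma hx hlen
  refine ⟨a.length + c.length, b.length, List.length_pos_iff.mpr hb, fun k => ?_⟩
  refine ⟨a ++ (List.replicate k b).flatten ++ c, hpump ?_, ?_⟩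
  · exact append_mem_mul
      (append_mem_mul rfl (join_mem_kstar fun y hy => List.eq_of_mem_replicate hy)) rfl
  · simp only [List.length_append, List.length_flatten, List.map_replicate, List.sum_replicate,
      smul_eq_mul]
    ring

theorem IsRegular.exists_length_lt_of_threeAPFree (hL : L.IsRegular) {T : Set ℕ}
    (hT : ThreeAPFree T) (hLT : ∀ x ∈ L, x.length ∈ T) : ∃ N, ∀ x ∈ L, x.length < N := by
  obtain ⟨N, hN⟩ := hL.exists_pumping_lengths
  refine ⟨N, fun x hx => not_le.mp fun hlen => ?_⟩
  obtain ⟨n, d, hd, hprog⟩ := hN x hx hlen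
  have hmem (k : ℕ) : n + k * d ∈ T := by
    obtain ⟨y, hy, hlen⟩ := hprog k
    exact hlen ▸ hLT y hy
  have := hT (hmem 0) (hmem 1) (hmem 2) (by ring)
  omega

end Language

theorem Nat.threeAPFree_range_pow {b : ℕ} (hb : 2 ≤ b) : ThreeAPFree (Set.range (b ^ ·)) := by
  rintro _ ⟨r, rfl⟩ _ ⟨p, rfl⟩ _ ⟨q, rfl⟩ h
  beta_reduce at h ⊢
  have double_le_of_lt (s : ℕ) (hs : b ^ p < b ^ s) : 2 * b ^ p ≤ b ^ s :=
    calc 2 * b ^ p ≤ b * b ^ p := Nat.mul_le_mul_right _ hb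
      _ = b ^ (p + 1) := Nat.pow_succ'.symm
      _ ≤ b ^ s := Nat.pow_le_pow_right (by omega) ((Nat.pow_lt_pow_iff_right (by omega)).mp hs)
  have : 0 < b ^ r := Nat.pow_pos (by omega)
  have : 0 < b ^ q := Nat.pow_pos (by omega)
  rcases lt_trichotomy (b ^ r) (b ^ p) with hlt | heq | hgt
  · have := double_le_of_lt q (by omega)
    omega
  · exact heq
  · have := double_le_of_lt r hgt
    omega

section unaryLang

variable {S T : Set ℕ}

theorem mem_unaryLang {w : List Unit} : w ∈ unaryLang S ↔ w.length ∈ S := Iff.rfl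

theorem replicate_mem_unaryLang {n : ℕ} : List.replicate n () ∈ unaryLang S ↔ n ∈ S := by
  rw [mem_unaryLang, List.length_replicate]

theorem Set.Finite.unaryLang (hS : S.Finite) : Set.Finite (unaryLang S) :=
  (hS.image (List.replicate · ())).subset fun w hw =>
    ⟨w.length, hw, (List.eq_replicate_iff.mpr ⟨rfl, fun _ _ => rfl⟩).symm⟩

theorem unaryLang_inf : unaryLang S ⊓ unaryLang T = unaryLang (S ∩ T) := rfl

theorem unaryLang_eq_bot_iff : unaryLang S = ⊥ ↔ S = ∅ := by
  refine ⟨fun h => Set.eq_empty_of_forall_notMem fun n hn => ?_, fun h => h ▸ rfl⟩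
  exact (h ▸ replicate_mem_unaryLang.mpr hn : List.replicate n () ∈ (⊥ : Language Unit))

end unaryLang

theorem stmt0 (S₀ S₁ : Set ℕ) (h : ∀ x : ℕ, (¬ ∃ n : ℕ, x = 2 ^ n) → x ∈ S₁) :
    RegularlySeparable (unaryLang S₀) (unaryLang S₁) ↔ S₀.Finite ∧ S₀ ∩ S₁ = ∅ := by
  constructor
  · rintro ⟨R, hR, hS₀R, hRS₁⟩
    have hpow (x : List Unit) (hx : x ∈ R) : x.length ∈ Set.range (2 ^ ·) := by
      by_contra hx'
      have : x ∈ R ⊓ unaryLang S₁ := ⟨hx, h _ fun ⟨n, hn⟩ => hx' ⟨n, hn.symm⟩⟩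
      exact (hRS₁ ▸ this : x ∈ (⊥ : Language Unit))
    obtain ⟨N, hN⟩ :=
      hR.exists_length_lt_of_threeAPFree (Nat.threeAPFree_range_pow le_rfl) hpow
    refine ⟨(Set.finite_Iio N).subset fun n hn => ?_, ?_⟩
    · simpa using hN _ (hS₀R (replicate_mem_unaryLang.mpr hn))
    · rw [← unaryLang_eq_bot_iff, ← unaryLang_inf, ← le_bot_iff, ← hRS₁]
      exact inf_le_inf_right _ hS₀R
  · rintro ⟨hfin, hdisj⟩
    refine ⟨_, Language.isRegular_of_finite hfin.unaryLang, le_rfl, ?_⟩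
    rw [unaryLang_inf, hdisj, unaryLang_eq_bot_iff]
end

section
/- Let Σ and Γ be alphabets, let T ⊆ Σ* × Γ* be a relation, and for K ⊆ Γ* write TK = {u ∈ Σ* : ∃v ∈ K, (u,v) ∈ T}, and for L ⊆ Σ* write T⁻¹L = {v ∈ Γ* : ∃u ∈ L, (u,v) ∈ T}. Assume that for every regular language R ⊆ Σ* the language T⁻¹R is regular, and that for every regular language R ⊆ Γ* the language TR is regular. Then for all L ⊆ Σ* and K ⊆ Γ*: L and TK are regularly separable if and only if T⁻¹L and K are regularly separable. -/
/-- The image `TK = {u : ∃ v ∈ K, (u,v) ∈ T}` of a language under a relation. -/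
def relImage {α β : Type} (T : List α → List β → Prop) (K : Language β) : Language α :=
  {u : List α | ∃ v ∈ K, T u v}

/-- The preimage `T⁻¹L = {v : ∃ u ∈ L, (u,v) ∈ T}` of a language under a relation. -/
def relPreimage {α β : Type} (T : List α → List β → Prop) (L : Language α) : Language β :=
  {v : List β | ∃ u ∈ L, T u v}

/-! A separator `R` of `L` from `TK` is pushed to the separator `T⁻¹R` of `T⁻¹L` from `K`;
conversely a separator `S` of `T⁻¹L` from `K` is pulled back to `(T Sᶜ)ᶜ`, the largest language
whose preimage lies in `S`. -/

section

variable {α β : Type} (T : List α → List β → Prop)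

theorem relImage_mono : Monotone (relImage T) :=
  fun _ _ hK _ ⟨v, hv, huv⟩ => ⟨v, hK hv, huv⟩

theorem relPreimage_mono : Monotone (relPreimage T) :=
  fun _ _ hL _ ⟨u, hu, huv⟩ => ⟨u, hL hu, huv⟩

theorem relPreimage_inf_eq_bot_iff (R : Language α) (K : Language β) :
    relPreimage T R ⊓ K = ⊥ ↔ R ⊓ relImage T K = ⊥ := by
  rw [← disjoint_iff, ← disjoint_iff]
  exact ⟨fun h => Set.disjoint_left.2 fun u hu ⟨v, hv, huv⟩ => Set.disjoint_left.1 h ⟨u, hu, huv⟩ hv,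
    fun h => Set.disjoint_left.2 fun v ⟨u, hu, huv⟩ hv => Set.disjoint_left.1 h hu ⟨v, hv, huv⟩⟩

theorem le_compl_relImage_compl_iff (L : Language α) (S : Language β) :
    L ≤ (relImage T Sᶜ)ᶜ ↔ relPreimage T L ≤ S :=
  ⟨fun h v ⟨_, hu, huv⟩ => by_contra fun hv => h hu ⟨v, hv, huv⟩,
    fun h u hu ⟨_, hv, huv⟩ => hv (h ⟨u, hu, huv⟩)⟩

end

theorem stmt2 {α β : Type} (T : List α → List β → Prop)
    (hpre : ∀ R : Language α, R.IsRegular → (relPreimage T R).IsRegular)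
    (himg : ∀ R : Language β, R.IsRegular → (relImage T R).IsRegular)
    (L : Language α) (K : Language β) :
    RegularlySeparable L (relImage T K) ↔ RegularlySeparable (relPreimage T L) K := by
  constructor
  · rintro ⟨R, hR, hLR, hRK⟩
    exact ⟨relPreimage T R, hpre R hR, relPreimage_mono T hLR,
      (relPreimage_inf_eq_bot_iff T R K).2 hRK⟩
  · rintro ⟨S, hS, hLS, hSK⟩
    refine ⟨(relImage T Sᶜ)ᶜ, (himg _ hS.compl).compl,
      (le_compl_relImage_compl_iff T L S).2 hLS, ?_⟩
    have hKS : K ≤ Sᶜ := le_compl_iff_disjoint_left.2 (disjoint_iff.2 hSK)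
    exact disjoint_iff.1 (disjoint_compl_left.mono_right (relImage_mono T hKS))
end

section
/- Let S₀, S₁ ⊆ 2^ℕ be sets of powers of two with S₁ infinite. Then the unary languages a^{(ℕ \ 2^ℕ) ∪ S₀} and a^{S₁} are not regularly separable. -/
/-! The complement of a separator `R` is regular, contains `a^x` for every `x ∈ S₁`, and contains
only words of power-of-two length. Pumping a long word `a^x` of it yields words of lengths `x + m`
and `x + 2m` with `m > 0`; but if `x + m = 2^p`, then `x + 2m` lies strictly between `2^p` and
`2^(p+1)`. -/

theorem Language.IsRegular.exists_pumping_length {α : Type} {L : Language α} (hL : L.IsRegular) :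
    ∃ N : ℕ, ∀ w ∈ L, N ≤ w.length →
      ∃ p > 0, ∀ n : ℕ, ∃ v ∈ L, v.length = w.length + n * p := by
  obtain ⟨σ, _, M, rfl⟩ := hL
  refine ⟨Fintype.card σ, fun w hw hN => ?_⟩
  obtain ⟨a, b, c, rfl, -, hb, hpump⟩ := M.pumping_lemma hw hN
  refine ⟨b.length, List.length_pos_iff.mpr hb, fun n =>
    ⟨a ++ (List.replicate (n + 1) b).flatten ++ c,
      hpump (Language.append_mem_mul (Language.append_mem_mul rfl ?_) rfl), ?_⟩⟩
  · exact Language.join_mem_kstar fun y hy => List.eq_of_mem_replicate hy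
  · simp only [List.append_assoc, List.length_append, List.length_flatten, List.map_replicate,
      List.sum_replicate, smul_eq_mul]
    ring

theorem add_two_mul_ne_two_pow_of_add_eq_two_pow {x m p q : ℕ} (hx : 0 < x) (hm : 0 < m)
    (hp : x + m = 2 ^ p) : x + 2 * m ≠ 2 ^ q := by
  intro hq
  have hpq : p < q := (Nat.pow_lt_pow_iff_right one_lt_two).mp (by omega)
  have : 2 ^ (p + 1) ≤ 2 ^ q := Nat.pow_le_pow_right two_pos hpq
  rw [pow_succ] at this
  omega

theorem stmt8_general (S₀ S₁ : Set ℕ)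
    (hinf : S₁.Infinite) :
    ¬ RegularlySeparable (unaryLang ({x : ℕ | ¬ ∃ n : ℕ, x = 2 ^ n} ∪ S₀)) (unaryLang S₁) := by
  rintro ⟨R, hR, hKR, hRL⟩
  have hpow : ∀ w ∉ R, ∃ n : ℕ, w.length = 2 ^ n := fun w hw =>
    by_contra fun h => hw (hKR (Or.inl h))
  obtain ⟨N, hpump⟩ := hR.compl.exists_pumping_length
  obtain ⟨x, hxS, hNx⟩ := hinf.exists_gt N
  have hxR : List.replicate x () ∉ R := fun h => by
    have : List.replicate x () ∈ R ⊓ unaryLang S₁ := ⟨h, by simpa [unaryLang] using hxS⟩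
    rwa [hRL] at this
  obtain ⟨m, hm, hpumped⟩ := hpump _ hxR (by simpa using hNx.le)
  obtain ⟨v₁, hv₁, hlen₁⟩ := hpumped 1
  obtain ⟨v₂, hv₂, hlen₂⟩ := hpumped 2
  obtain ⟨p, hp⟩ := hpow v₁ hv₁
  obtain ⟨q, hq⟩ := hpow v₂ hv₂
  rw [List.length_replicate] at hlen₁ hlen₂
  exact add_two_mul_ne_two_pow_of_add_eq_two_pow (by omega : 0 < x) hm
    (by omega : x + m = 2 ^ p) (by omega : x + 2 * m = 2 ^ q)

theorem stmt8 (S₀ S₁ : Set ℕ)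
    (h₀ : S₀ ⊆ {x : ℕ | ∃ n : ℕ, x = 2 ^ n})
    (h₁ : S₁ ⊆ {x : ℕ | ∃ n : ℕ, x = 2 ^ n})
    (hinf : S₁.Infinite) :
    ¬ RegularlySeparable (unaryLang ({x : ℕ | ¬ ∃ n : ℕ, x = 2 ^ n} ∪ S₀)) (unaryLang S₁) :=
  stmt8_general S₀ S₁ hinf
end

section
/- Let Σ be an alphabet, let # be a letter of the ambient alphabet that does not occur in any word of L or of K, where L and K are languages all of whose words avoid #. Then L ∩ K ≠ ∅ if and only if the language L·{#}* ∩ K·{#}* is infinite. -/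
/-! Since `#` occurs in no word of `L` or `K`, a word `u #ⁿ` with `u ∈ L` determines `u` as its
longest `#`-free prefix. Hence the common words of `L·#*` and `K·#*` are exactly the `w #ⁿ` with
`w ∈ L ∩ K`: there are none if `L ∩ K = ∅`, and infinitely many otherwise. -/

open Computability

theorem List.takeWhile_ne_append_replicate {α : Type*} [DecidableEq α] {a : α} {u : List α}
    (hu : a ∉ u) (n : ℕ) : (u ++ List.replicate n a).takeWhile (· ≠ a) = u := by
  have hne : ∀ x ∈ u, decide (x ≠ a) = true := fun x hx => by
    simpa using ne_of_mem_of_not_mem hx hu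
  rw [List.takeWhile_append_of_pos hne, List.takeWhile_replicate]
  simp

theorem List.eq_of_append_replicate_eq {α : Type*} {a : α} {u v : List α} (hu : a ∉ u)
    (hv : a ∉ v) {m k : ℕ} (h : u ++ List.replicate m a = v ++ List.replicate k a) : u = v := by
  classical
  rw [← List.takeWhile_ne_append_replicate hu m, h, List.takeWhile_ne_append_replicate hv k]

theorem List.append_replicate_injective {α : Type*} (u : List α) (a : α) :
    Function.Injective fun n => u ++ List.replicate n a :=
  (List.append_right_injective u).comp (List.replicate_left_injective a)

namespace Language

variable {α : Type*}

theorem mem_kstar_singleton_iff {a : α} {w : List α} :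
    w ∈ ({[a]} : Language α)∗ ↔ ∃ n, List.replicate n a = w := by
  rw [mem_kstar]
  constructor
  · rintro ⟨S, rfl, hS⟩
    rw [List.eq_replicate_iff.mpr ⟨rfl, hS⟩]
    exact ⟨S.length, by simp⟩
  · rintro ⟨n, rfl⟩
    exact ⟨List.replicate n [a], by simp, fun y hy => by rw [List.eq_of_mem_replicate hy]; rfl⟩

theorem mem_mul_kstar_singleton_iff {L : Language α} {a : α} {w : List α} :
    w ∈ L * ({[a]} : Language α)∗ ↔ ∃ u ∈ L, ∃ n, u ++ List.replicate n a = w := by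
  simp only [mem_mul, mem_kstar_singleton_iff]
  constructor
  · rintro ⟨u, hu, _, ⟨n, rfl⟩, rfl⟩
    exact ⟨u, hu, n, rfl⟩
  · rintro ⟨u, hu, n, rfl⟩
    exact ⟨u, hu, _, ⟨n, rfl⟩, rfl⟩

end Language

theorem stmt12 {α : Type} (hash : α) (L K : Language α)
    (hL : ∀ w ∈ L, hash ∉ w) (hK : ∀ w ∈ K, hash ∉ w) :
    (∃ w : List α, w ∈ L ∧ w ∈ K) ↔
      {w : List α | w ∈ L * ({[hash]} : Language α)∗ ∧
                    w ∈ K * ({[hash]} : Language α)∗}.Infinite := by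
  simp only [Language.mem_mul_kstar_singleton_iff]
  constructor
  · rintro ⟨w, hwL, hwK⟩
    refine Set.infinite_of_injective_forall_mem (List.append_replicate_injective w hash) ?_
    exact fun n => ⟨⟨w, hwL, n, rfl⟩, ⟨w, hwK, n, rfl⟩⟩
  · intro hinf
    obtain ⟨w, ⟨u, huL, m, rfl⟩, ⟨v, hvK, k, hw⟩⟩ := hinf.nonempty
    obtain rfl := List.eq_of_append_replicate_eq (hK v hvK) (hL u huL) hw
    exact ⟨v, huL, hvK⟩
end
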